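/- arXiv:1611.06313 — 2 statements merged into one kernel-verified Lean document; each statement's English description precedes it below -/
import Mathlib

section
/- The differential operator 𝔡 = −d²/dx² + 2(x³ + b x)d/dx − ((4m)x² − b) maps the space of even polynomials of degree at most 2m into itself. -/
/-!
The operator commutes with the reflection `x ↦ -x`, so it preserves evenness, and hence every odd
coefficient of its value vanishes. It raises degrees by at most two, and in degree `2m + 2` the
contributions `4m q_{2m}` of `2x³Q'` and of `4m x²Q` cancel.
-/

open Polynomial

/-- The operator 𝔡 = −d²/dx² + 2(x³ + b x)d/dx − ((4m)x² − b). -/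
noncomputable def sexticOpEven (m : ℕ) (b : ℂ) (Q : Polynomial ℂ) : Polynomial ℂ :=
  -(Q.derivative.derivative) + 2 * (X ^ 3 + C b * X) * Q.derivative
    - (C (4 * (m : ℂ)) * X ^ 2 - C b) * Q

namespace Polynomial

variable {R : Type*} [CommRing R]

theorem coeff_comp_neg_X (p : R[X]) (n : ℕ) : (p.comp (-X)).coeff n = (-1) ^ n * p.coeff n := by
  induction p using Polynomial.induction_on' with
  | add p q hp hq => simp [add_comp, hp, hq, mul_add]
  | monomial k a =>
    rw [← C_mul_X_pow_eq_monomial, mul_comp, C_comp, X_pow_comp, neg_pow, ← mul_assoc,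
      show (-1 : R[X]) ^ k = C ((-1) ^ k) by simp, ← C_mul, coeff_C_mul_X_pow, coeff_C_mul_X_pow]
    split_ifs with h <;> simp [h, mul_comm]

theorem coeff_odd_eq_zero_of_comp_neg_X_eq_self [IsAddTorsionFree R] {p : R[X]}
    (hp : p.comp (-X) = p) (k : ℕ) : p.coeff (2 * k + 1) = 0 := by
  have h := congrArg (coeff · (2 * k + 1)) hp
  rw [coeff_comp_neg_X, pow_succ, pow_mul, neg_one_sq, one_pow, one_mul, neg_one_mul] at h
  exact neg_eq_self.mp h

theorem derivative_comp_neg_X (p : R[X]) :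
    derivative (p.comp (-X)) = -(derivative p).comp (-X) := by
  simp [derivative_comp]

end Polynomial

theorem sexticOpEven_comp_neg_X (m : ℕ) (b : ℂ) (Q : ℂ[X]) :
    (sexticOpEven m b Q).comp (-X) = sexticOpEven m b (Q.comp (-X)) := by
  simp only [sexticOpEven, derivative_comp_neg_X, derivative_neg, sub_comp, add_comp, neg_comp,
    mul_comp, pow_comp, X_comp, C_comp, ofNat_comp]
  ring

theorem coeff_sexticOpEven_add_two (m : ℕ) (b : ℂ) (Q : ℂ[X]) (n : ℕ) :
    (sexticOpEven m b Q).coeff (n + 2) =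
      -((n + 4) * (n + 3)) * Q.coeff (n + 4) + (2 * n + 5) * b * Q.coeff (n + 2)
        + (2 * n - 4 * m) * Q.coeff n := by
  have hX3 : (X ^ 3 * derivative Q).coeff (n + 2) = n * Q.coeff n := by
    rcases n with _ | n
    · simp [coeff_X_pow_mul']
    · rw [show n + 1 + 2 = n + 3 by ring, coeff_X_pow_mul, coeff_derivative]
      push_cast; ring
  have hform : sexticOpEven m b Q = -derivative (derivative Q) + 2 * (X ^ 3 * derivative Q)
      + 2 * (C b * (X * derivative Q)) + C b * Q - C (4 * (m : ℂ)) * (X ^ 2 * Q) := by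
    rw [sexticOpEven, C_mul, C_ofNat]; ring
  rw [hform]
  simp only [coeff_add, coeff_sub, coeff_neg, coeff_ofNat_mul, coeff_C_mul, hX3, coeff_X_mul,
    coeff_X_pow_mul, coeff_derivative]
  push_cast; ring

theorem degree_sexticOpEven_le {m : ℕ} (b : ℂ) {Q : ℂ[X]} (heven : Q.comp (-X) = Q)
    (hdeg : Q.degree ≤ (2 * m : ℕ)) : (sexticOpEven m b Q).degree ≤ (2 * m : ℕ) := by
  have hQ : ∀ n, 2 * m < n → Q.coeff n = 0 := fun n hn =>
    coeff_eq_zero_of_degree_lt (hdeg.trans_lt (by exact_mod_cast hn))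
  rw [degree_le_iff_coeff_zero]
  intro N hN
  obtain ⟨k, rfl | rfl⟩ := N.even_or_odd'
  · obtain ⟨n, rfl⟩ : ∃ n, k = m + n + 1 := ⟨k - m - 1, by norm_cast at hN; omega⟩
    rw [show 2 * (m + n + 1) = 2 * (m + n) + 2 by ring, coeff_sexticOpEven_add_two,
      hQ _ (by omega), hQ _ (by omega)]
    rcases n with _ | n
    · push_cast; ring
    · rw [hQ _ (by omega)]; ring
  · have h𝔡even := sexticOpEven_comp_neg_X m b Q
    rw [heven] at h𝔡even
    exact coeff_odd_eq_zero_of_comp_neg_X_eq_self h𝔡even k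

/-- 𝔡 maps even polynomials of degree ≤ 2m into even polynomials of degree ≤ 2m. -/
theorem stmt1 (m : ℕ) (b : ℂ) (Q : Polynomial ℂ)
    (heven : Q.comp (-X) = Q) (hdeg : Q.degree ≤ (2 * m : ℕ)) :
    (sexticOpEven m b Q).comp (-X) = sexticOpEven m b Q ∧
      (sexticOpEven m b Q).degree ≤ (2 * m : ℕ) :=
  ⟨by rw [sexticOpEven_comp_neg_X, heven], degree_sexticOpEven_le b heven hdeg⟩
end

section
/- For b = u + iv with v ≠ 0 and any τ ∈ [0,1], the point λ(τ) = 4τb + 8√(τ²(1−τ)) (with either sign of the square root) lies on the cubic Γ_b: writing λ(τ) = x + iy, one has (x − uy/v)² = (4v − y)y²/v³. -/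
/-! The point `λ = 4τb + s` has `y = 4τv` and `x - u y / v = s`, so both sides of the cubic
reduce to `64 τ² (1 - τ)`: the left one because `s² = 64 τ² (1 - τ)`, the right one identically. -/

lemma sq_sub_mul_div_eq_of_sq_eq {u v τ s : ℝ} (hv : v ≠ 0) (hs : s ^ 2 = 64 * (τ ^ 2 * (1 - τ))) :
    (4 * τ * u + s - u * (4 * τ * v) / v) ^ 2
      = (4 * v - 4 * τ * v) * (4 * τ * v) ^ 2 / v ^ 3 := by
  have hx : 4 * τ * u + s - u * (4 * τ * v) / v = s := by field_simp; ring
  rw [hx, hs]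
  field_simp
  ring

lemma sq_signed_sqrt {ε a : ℝ} (hε : ε = 1 ∨ ε = -1) (ha : 0 ≤ a) :
    (ε * 8 * Real.sqrt a) ^ 2 = 64 * a := by
  have hε2 : ε ^ 2 = 1 := by rcases hε with rfl | rfl <;> norm_num
  rw [mul_pow, mul_pow, hε2, Real.sq_sqrt ha]
  ring

/-- for b = u + iv with v ≠ 0 and τ ∈ [0,1], the point
λ(τ) = 4τb ± 8√(τ²(1−τ)) lies on the cubic Γ_b: writing λ = x + iy,
(x − uy/v)² = (4v − y)y²/v³. -/
theorem stmt17 (u v τ : ℝ) (hv : v ≠ 0) (hτ : τ ∈ Set.Icc (0 : ℝ) 1)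
    (ε : ℝ) (hε : ε = 1 ∨ ε = -1) :
    ((4 * τ * (Complex.mk u v) + (ε * 8 * Real.sqrt (τ ^ 2 * (1 - τ)) : ℝ)).re
        - u * (4 * τ * (Complex.mk u v) + (ε * 8 * Real.sqrt (τ ^ 2 * (1 - τ)) : ℝ)).im / v) ^ 2
      = (4 * v - (4 * τ * (Complex.mk u v) + (ε * 8 * Real.sqrt (τ ^ 2 * (1 - τ)) : ℝ)).im)
          * (4 * τ * (Complex.mk u v) + (ε * 8 * Real.sqrt (τ ^ 2 * (1 - τ)) : ℝ)).im ^ 2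
          / v ^ 3 := by
  have hnonneg : 0 ≤ τ ^ 2 * (1 - τ) := mul_nonneg (sq_nonneg τ) (by linarith [hτ.2])
  have hs := sq_signed_sqrt hε hnonneg
  simp only [Complex.add_re, Complex.add_im, Complex.mul_re, Complex.mul_im, Complex.ofReal_re,
    Complex.ofReal_im, Complex.re_ofNat, Complex.im_ofNat]
  convert sq_sub_mul_div_eq_of_sq_eq (u := u) hv hs using 3 <;> ring
end
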